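/- Equal rows propagate: Let G act transitively on {1,...,m} via π and let W be an m×d matrix satisfying ρ(g) W = W ρ'(g) for all g ∈ G, where ρ(g) acts by permuting rows according to π(g) and ρ' is a representation on ℝᵈ. Suppose rows k and k' of W are equal, with k ≠ k', and let h ∈ G satisfy π(h)(k') = k. Let A be the subgroup generated by h together with the stabilizer S_k = {g : row k of ρ(g)W equals row k of W}. Then for any a ∈ A, row π(a⁻¹)(k) of W equals row k of W. -/

import Mathlib

/-- The `m × m` permutation matrix of `σ`, acting by `(P_σ x)_i = x_{σ⁻¹ i}`,
so that `P_σ W` has row `i` equal to row `σ⁻¹ i` of `W`. -/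
def permMat {m : ℕ} (σ : Equiv.Perm (Fin m)) : Matrix (Fin m) (Fin m) ℝ :=
  Matrix.of fun i j => if σ j = i then (1 : ℝ) else 0

lemma permMat_mul_apply {m d : ℕ} (σ : Equiv.Perm (Fin m))
    (W : Matrix (Fin m) (Fin d) ℝ) (i : Fin m) (j : Fin d) :
    (permMat σ * W) i j = W (σ.symm i) j := by
  simp only [permMat, Matrix.mul_apply, Matrix.of_apply]
  rw [Finset.sum_eq_single (σ.symm i)]
  · simp
  · intro b _ hb
    rw [if_neg, zero_mul]
    intro hc
    exact hb (by simpa using congrArg σ.symm hc)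
  · simp

/-- Equal rows propagate: Let `G` act transitively on `{1,…,m}`
via `π` and let `W` satisfy `ρ(g) W = W ρ'(g)` for all `g`. Suppose rows `k` and
`k'` of `W` are equal (`k ≠ k'`), `π(h)(k') = k`, and `A` is the subgroup
generated by `h` together with the stabilizer
`S_k = {g : row k of ρ(g)W = row k of W}`. Then for every `a ∈ A`, row
`π(a⁻¹)(k)` of `W` equals row `k`. -/
theorem stmt_13 {G : Type*} [Group G] {m d : ℕ}
    (π : G →* Equiv.Perm (Fin m))
    (htrans : ∀ k k' : Fin m, ∃ g : G, π g k' = k)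
    (ρ' : G →* Matrix.GeneralLinearGroup (Fin d) ℝ)
    (W : Matrix (Fin m) (Fin d) ℝ)
    (hequiv : ∀ g : G, permMat (π g) * W = W * (ρ' g : Matrix (Fin d) (Fin d) ℝ))
    (k k' : Fin m) (hkk' : k ≠ k')
    (hrows : ∀ j : Fin d, W k j = W k' j)
    (h : G) (hh : π h k' = k) :
    ∀ a ∈ Subgroup.closure
        (insert h {g : G | ∀ j : Fin d, (permMat (π g) * W) k j = W k j}),
      ∀ j : Fin d, W ((π a⁻¹) k) j = W k j := by
  have heq : ∀ (g : G) (i : Fin m) (j : Fin d),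
      W ((π g).symm i) j = ∑ l, W i l * (ρ' g : Matrix (Fin d) (Fin d) ℝ) l j := by
    intro g i j
    have := congrFun (congrFun (hequiv g) i) j
    rwa [permMat_mul_apply, Matrix.mul_apply] at this
  have key : ∀ (g : G) (i : Fin m), (∀ j, W i j = W k j) →
      ∀ j, W ((π g).symm i) j = W ((π g).symm k) j := by
    intro g i hi j
    rw [heq, heq]
    exact Finset.sum_congr rfl fun l _ => by rw [hi]
  intro a ha
  have hmem : ∀ j, W ((π a).symm k) j = W k j := by
    induction ha using Subgroup.closure_induction with
    | mem g hg =>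
      rcases hg with rfl | hg
      · intro j
        have hk' : (π g).symm k = k' := by
          rw [← hh]; simp
        rw [hk']; exact (hrows j).symm
      · intro j
        have := hg j
        rwa [permMat_mul_apply] at this
    | one => intro j; rw [map_one]; rfl
    | mul x y hx hy ihx ihy =>
      intro j
      have hstep := key y ((π x).symm k) (fun j => ihx j) j
      have hc : (Equiv.symm (π (x * y))) k = (π y).symm ((π x).symm k) := by
        rw [map_mul]; rfl
      rw [hc, hstep, ihy j]
    | inv x hx ihx =>
      intro j
      have hstep := key x⁻¹ ((π x).symm k) (fun j => ihx j) j
      simp only [map_inv, Equiv.Perm.inv_def, Equiv.symm_symm,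
        Equiv.apply_symm_apply] at hstep ⊢
      exact hstep.symm
  intro j
  have hkk : (π a⁻¹) k = (π a).symm k := by
    simp [map_inv, Equiv.Perm.inv_def]
  rw [hkk]; exact hmem j
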